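/- arXiv:1409.3152 — 2 statements merged into one kernel-verified Lean document; each statement's English description precedes it below -/
import Mathlib

section
/- Let f : M × ℝ^N → ℝ be smooth and define the difference function δ : M × ℝ^N × ℝ^N → ℝ by δ(x, η, η̃) = f(x, η̃) − f(x, η). Then (x, η, η̃) is a critical point of δ with δ(x,η,η̃) = c ≠ 0 if and only if (x,η) and (x,η̃) both lie in the fiber critical set Σ_f of f, ∂_x f(x,η) = ∂_x f(x,η̃), and f(x,η̃) − f(x,η) = c. Consequently, critical points of δ with positive critical value correspond bijectively to Reeb chords of the Legendrian generated by f, i.e. pairs of points of the immersed Legendrian j_f(Σ_f) with the same (x, ∂_x f)-coordinates and z-coordinates differing by c > 0. -/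
/-- For smooth `f : M × ℝ^N → ℝ` (here `M = ℝ^n`) and its
difference function `δ(x,η,η̃) = f(x,η̃) − f(x,η)`, a point `(x,η,η̃)` is a
critical point of `δ` with critical value `c ≠ 0` if and only if `(x,η)` and
`(x,η̃)` both lie in the fiber critical set of `f`, `∂_x f(x,η) = ∂_x f(x,η̃)`,
and `f(x,η̃) − f(x,η) = c`; i.e. critical points of `δ` with positive critical
value correspond to Reeb chords of the generated Legendrian. -/
theorem stmt9 (n N : ℕ)
    (f : EuclideanSpace ℝ (Fin n) × EuclideanSpace ℝ (Fin N) → ℝ)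
    (hf : ContDiff ℝ (⊤ : ℕ∞) f)
    (δ : EuclideanSpace ℝ (Fin n) × EuclideanSpace ℝ (Fin N) × EuclideanSpace ℝ (Fin N) → ℝ)
    (hδ : ∀ x η η', δ (x, η, η') = f (x, η') - f (x, η))
    (x : EuclideanSpace ℝ (Fin n)) (η η' : EuclideanSpace ℝ (Fin N)) (c : ℝ)
    (hc : c ≠ 0) :
    (fderiv ℝ δ (x, η, η') = 0 ∧ δ (x, η, η') = c) ↔
      (fderiv ℝ (fun e => f (x, e)) η = 0
        ∧ fderiv ℝ (fun e => f (x, e)) η' = 0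
        ∧ fderiv ℝ (fun y => f (y, η)) x = fderiv ℝ (fun y => f (y, η')) x
        ∧ f (x, η') - f (x, η) = c) := by
  have hdf : Differentiable ℝ f := hf.differentiable (by simp)
  set D₁ := fderiv ℝ f (x, η) with hD₁
  set D₂ := fderiv ℝ f (x, η') with hD₂
  -- partial derivatives as compositions
  have hp1 : HasFDerivAt (fun e : EuclideanSpace ℝ (Fin N) => f (x, e))
      (D₁.comp (ContinuousLinearMap.inr ℝ _ _)) η :=
    (hdf (x, η)).hasFDerivAt.comp η (hasFDerivAt_prodMk_right x η)
  have hp2 : HasFDerivAt (fun e : EuclideanSpace ℝ (Fin N) => f (x, e))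
      (D₂.comp (ContinuousLinearMap.inr ℝ _ _)) η' :=
    (hdf (x, η')).hasFDerivAt.comp η' (hasFDerivAt_prodMk_right x η')
  have hq1 : HasFDerivAt (fun y : EuclideanSpace ℝ (Fin n) => f (y, η))
      (D₁.comp (ContinuousLinearMap.inl ℝ _ _)) x :=
    (hdf (x, η)).hasFDerivAt.comp x (hasFDerivAt_prodMk_left x η)
  have hq2 : HasFDerivAt (fun y : EuclideanSpace ℝ (Fin n) => f (y, η'))
      (D₂.comp (ContinuousLinearMap.inl ℝ _ _)) x :=
    (hdf (x, η')).hasFDerivAt.comp x (hasFDerivAt_prodMk_left x η')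
  -- the two linear projections
  set L₁ : (EuclideanSpace ℝ (Fin n) × EuclideanSpace ℝ (Fin N) × EuclideanSpace ℝ (Fin N))
      →L[ℝ] (EuclideanSpace ℝ (Fin n) × EuclideanSpace ℝ (Fin N)) :=
    (ContinuousLinearMap.fst ℝ _ _).prod
      ((ContinuousLinearMap.fst ℝ _ _).comp (ContinuousLinearMap.snd ℝ _ _)) with hL₁
  set L₂ : (EuclideanSpace ℝ (Fin n) × EuclideanSpace ℝ (Fin N) × EuclideanSpace ℝ (Fin N))
      →L[ℝ] (EuclideanSpace ℝ (Fin n) × EuclideanSpace ℝ (Fin N)) :=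
    (ContinuousLinearMap.fst ℝ _ _).prod
      ((ContinuousLinearMap.snd ℝ _ _).comp (ContinuousLinearMap.snd ℝ _ _)) with hL₂
  have hδfun : δ = fun q => f (L₂ q) - f (L₁ q) := by
    funext q
    obtain ⟨a, b, c'⟩ := q
    exact hδ a b c'
  have hDδ : HasFDerivAt δ (D₂.comp L₂ - D₁.comp L₁) (x, η, η') := by
    rw [hδfun]
    have h2 : HasFDerivAt (fun q => f (L₂ q)) (D₂.comp L₂) (x, η, η') :=
      HasFDerivAt.comp _ (hdf (x, η')).hasFDerivAt (L₂.hasFDerivAt)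
    have h1 : HasFDerivAt (fun q => f (L₁ q)) (D₁.comp L₁) (x, η, η') :=
      HasFDerivAt.comp _ (hdf (x, η)).hasFDerivAt (L₁.hasFDerivAt)
    exact h2.sub h1
  rw [hDδ.fderiv, hp1.fderiv, hp2.fderiv, hq1.fderiv, hq2.fderiv, hδ]
  constructor
  · rintro ⟨h0, hv⟩
    have key : ∀ q, D₂ (L₂ q) = D₁ (L₁ q) := by
      intro q
      have := ContinuousLinearMap.ext_iff.mp h0 q
      simpa [sub_eq_zero] using this
    refine ⟨?_, ?_, ?_, hv⟩
    · refine ContinuousLinearMap.ext fun v => ?_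
      have h := key (0, v, 0)
      have l1 : L₁ (0, v, 0) = (0, v) := rfl
      have l2 : L₂ (0, v, 0) = (0, 0) := rfl
      rw [l1, l2] at h
      have : ((0, 0) : EuclideanSpace ℝ (Fin n) × EuclideanSpace ℝ (Fin N)) = 0 := rfl
      rw [this, map_zero] at h
      simpa using h.symm
    · refine ContinuousLinearMap.ext fun v => ?_
      have h := key (0, 0, v)
      have l1 : L₁ (0, 0, v) = (0, 0) := rfl
      have l2 : L₂ (0, 0, v) = (0, v) := rfl
      rw [l1, l2] at h
      have : ((0, 0) : EuclideanSpace ℝ (Fin n) × EuclideanSpace ℝ (Fin N)) = 0 := rfl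
      rw [this, map_zero] at h
      simpa using h
    · refine ContinuousLinearMap.ext fun u => ?_
      have h := key (u, 0, 0)
      have l1 : L₁ (u, 0, 0) = (u, 0) := rfl
      have l2 : L₂ (u, 0, 0) = (u, 0) := rfl
      rw [l1, l2] at h
      simpa using h.symm
  · rintro ⟨h1, h2, h3, hv⟩
    refine ⟨?_, hv⟩
    refine ContinuousLinearMap.ext fun q => ?_
    obtain ⟨u, v, w⟩ := q
    have e1 : D₁ (0, v) = 0 := congrFun (congrArg DFunLike.coe h1) v
    have e2 : D₂ (0, w) = 0 := congrFun (congrArg DFunLike.coe h2) w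
    have e3 : D₁ (u, 0) = D₂ (u, 0) := congrFun (congrArg DFunLike.coe h3) u
    have d1 : D₁ (u, v) = D₁ (u, 0) + D₁ (0, v) := by
      rw [← map_add]; norm_num
    have d2 : D₂ (u, w) = D₂ (u, 0) + D₂ (0, w) := by
      rw [← map_add]; norm_num
    show D₂ (L₂ (u, v, w)) - D₁ (L₁ (u, v, w)) = 0
    have lv2 : L₂ (u, v, w) = (u, w) := rfl
    have lv1 : L₁ (u, v, w) = (u, v) := rfl
    rw [lv1, lv2, d1, d2, e1, e2, e3]
    ring
end

section
/- Let δ : ℝ → ℝ-valued data be as follows: suppose h > 0, t_-, t_+ > 0, and g : [t_-, t_+] × K → ℝ is continuous on a compact set K with |g(t,x)| ≥ h for all (t,x), and ∂_t g is bounded, say |∂_t g| ≤ C. Then there exists an orientation-preserving diffeomorphism ρ of ℝ_{>0} such that for the reparametrized family g̃(t,x) := g(ρ(t),x), at every point one has |g̃(t,x)|/t > |∂_t g̃(t,x)|. -/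
open Set

/-- reparametrization trick: Suppose `h > 0`, `0 < t₋ ≤ t₊`,
`K` is compact, `g : ℝ × K → ℝ` is continuous with `|g(t,x)| ≥ h` and
`|∂_t g(t,x)| ≤ C` for `t ∈ [t₋, t₊]`.  Then there is an orientation-preserving
diffeomorphism `ρ` of `ℝ_{>0}` such that the reparametrized family
`g̃(t,x) := g(ρ(t), x)` satisfies `|g̃(t,x)|/t > |∂_t g̃(t,x)|` at every point
(with `ρ(t) ∈ [t₋, t₊]`). -/
theorem stmt19 (K : Type*) [TopologicalSpace K] [CompactSpace K]
    (h C tm tp : ℝ) (hh : 0 < h) (htm : 0 < tm) (htp : 0 < tp) (hmp : tm ≤ tp)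
    (g : ℝ → K → ℝ)
    (hcont : Continuous fun p : ℝ × K => g p.1 p.2)
    (hdiff : ∀ x, Differentiable ℝ fun t => g t x)
    (hlower : ∀ t ∈ Icc tm tp, ∀ x, h ≤ |g t x|)
    (hupper : ∀ t ∈ Icc tm tp, ∀ x, |deriv (fun s => g s x) t| ≤ C) :
    ∃ ρ : ℝ → ℝ, ContDiff ℝ (⊤ : ℕ∞) ρ
      ∧ Set.BijOn ρ (Ioi (0 : ℝ)) (Ioi (0 : ℝ))
      ∧ (∀ t ∈ Ioi (0 : ℝ), 0 < deriv ρ t)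
      ∧ (∀ t ∈ Ioi (0 : ℝ), ρ t ∈ Icc tm tp →
          ∀ x, |deriv (fun s => g (ρ s) x) t| < |g (ρ t) x| / t) := by
  set C' : ℝ := max C 0 with hC'def
  have hC'0 : (0 : ℝ) ≤ C' := le_max_right _ _
  set M : ℝ := h / (2 * (C' + 1)) with hMdef
  have hMpos : 0 < M := div_pos hh (by positivity)
  have hqpos : ∀ t : ℝ, 0 < t ^ 2 + t + 1 := fun t => by nlinarith [sq_nonneg (t + 1/2)]
  set ρ : ℝ → ℝ := fun t => M * Real.log (t ^ 2 + t + 1) with hρdef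
  have hqderiv : ∀ t : ℝ, HasDerivAt (fun s : ℝ => s ^ 2 + s + 1) (2 * t + 1) t := by
    intro t
    have := ((hasDerivAt_pow 2 t).add (hasDerivAt_id t)).add_const 1
    refine this.congr_deriv ?_
    push_cast
    ring
  have hρderiv : ∀ t : ℝ, HasDerivAt ρ (M * ((2 * t + 1) / (t ^ 2 + t + 1))) t := by
    intro t
    have hl := (Real.hasDerivAt_log (hqpos t).ne').comp t (hqderiv t)
    have := hl.const_mul M
    refine this.congr_deriv ?_
    field_simp
  have hderivval : ∀ t : ℝ, deriv ρ t = M * ((2 * t + 1) / (t ^ 2 + t + 1)) :=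
    fun t => (hρderiv t).deriv
  have hsmooth : ContDiff ℝ (⊤ : ℕ∞) ρ := by
    apply ContDiff.mul contDiff_const
    apply ContDiff.log
    · fun_prop
    · exact fun t => (hqpos t).ne'
  have hderivpos : ∀ t ∈ Ioi (0 : ℝ), 0 < deriv ρ t := by
    intro t ht
    rw [hderivval]
    have ht' : (0:ℝ) < t := ht
    have : 0 < 2 * t + 1 := by linarith
    positivity
  have hmono : StrictMonoOn ρ (Ici (0 : ℝ)) := by
    apply strictMonoOn_of_deriv_pos (convex_Ici 0) (hsmooth.continuous.continuousOn)
    intro t ht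
    rw [interior_Ici] at ht
    exact hderivpos t ht
  refine ⟨ρ, hsmooth, ⟨?_, ?_, ?_⟩, hderivpos, ?_⟩
  · -- MapsTo
    intro t ht
    have ht' : (0:ℝ) < t := ht
    have : (1:ℝ) < t ^ 2 + t + 1 := by nlinarith
    exact mul_pos hMpos (Real.log_pos this)
  · exact hmono.injOn.mono Ioi_subset_Ici_self
  · -- SurjOn
    intro y hy
    have hy' : (0:ℝ) < y := hy
    set u : ℝ := Real.exp (y / M) with hu
    have hu1 : (1:ℝ) < u := by
      rw [hu, ← Real.exp_zero]
      exact Real.exp_lt_exp.mpr (by positivity)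
    have h43 : (0:ℝ) ≤ 4 * u - 3 := by linarith
    set s : ℝ := Real.sqrt (4 * u - 3) with hs
    have hs2 : s ^ 2 = 4 * u - 3 := Real.sq_sqrt h43
    have hs1 : (1:ℝ) < s := by
      rw [hs]
      rw [show (1:ℝ) = Real.sqrt 1 from (Real.sqrt_one).symm]
      exact Real.sqrt_lt_sqrt (by norm_num) (by linarith)
    refine ⟨(s - 1) / 2, ?_, ?_⟩
    · show (0:ℝ) < (s - 1) / 2
      linarith
    · show ρ ((s - 1) / 2) = y
      have hq : ((s - 1) / 2) ^ 2 + (s - 1) / 2 + 1 = u := by nlinarith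
      rw [hρdef]
      simp only []
      rw [hq, hu, Real.log_exp]
      field_simp
  · -- main inequality
    intro t ht hmem x
    have ht' : (0:ℝ) < t := ht
    have hC : |deriv (fun s => g s x) (ρ t)| ≤ C' :=
      le_trans (hupper (ρ t) hmem x) (le_max_left _ _)
    have hg : h ≤ |g (ρ t) x| := hlower (ρ t) hmem x
    have hcomp : HasDerivAt (fun s => g (ρ s) x)
        (deriv (fun s => g s x) (ρ t) * (M * ((2 * t + 1) / (t ^ 2 + t + 1)))) t :=
      ((hdiff x (ρ t)).hasDerivAt).comp t (hρderiv t)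
    rw [hcomp.deriv, lt_div_iff₀ ht']
    have hDpos : 0 < M * ((2 * t + 1) / (t ^ 2 + t + 1)) := by
      have : (0:ℝ) < 2 * t + 1 := by linarith
      have := hqpos t
      positivity
    rw [abs_mul, abs_of_pos hDpos]
    have key : C' * (M * ((2 * t + 1) / (t ^ 2 + t + 1))) * t < h := by
      have hq := hqpos t
      have heq : C' * (M * ((2 * t + 1) / (t ^ 2 + t + 1))) * t
          = (C' * h * (2 * t + 1) * t) / ((2 * (C' + 1)) * (t ^ 2 + t + 1)) := by
        rw [hMdef]; field_simp
      rw [heq, div_lt_iff₀ (by positivity)]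
      nlinarith [mul_nonneg hC'0 ht'.le, mul_nonneg (mul_nonneg hC'0 ht'.le) ht'.le]
    calc |deriv (fun s => g s x) (ρ t)| * (M * ((2 * t + 1) / (t ^ 2 + t + 1))) * t
        ≤ C' * (M * ((2 * t + 1) / (t ^ 2 + t + 1))) * t := by
          apply mul_le_mul_of_nonneg_right (mul_le_mul_of_nonneg_right hC hDpos.le) ht'.le
      _ < h := key
      _ ≤ |g (ρ t) x| := hg
end
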